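/- arXiv:1607.02096 — 3 statements merged into one kernel-verified Lean document; each statement's English description precedes it below -/
import Mathlib

section
/- Let A be an n×n real symmetric matrix and let X₁ ∈ ℝ^{n×ρ} and X₂ ∈ ℝ^{n×(n−ρ)} be matrices such that the block matrix [X₁ X₂] is orthogonal and X₁ᵀAX₂ = 0 (so that, writing L₁ = X₁ᵀAX₁ and L₂ = X₂ᵀAX₂, the pair gives a spectral resolution [X₁ X₂]ᵀ A [X₁ X₂] = diag(L₁, L₂)). Let Z ∈ ℝ^{n×ρ} have orthonormal columns (ZᵀZ = I_ρ), let M be a ρ×ρ real symmetric matrix, and define the residual R = AZ − ZM. Suppose there exist reals α ≤ β and δ > 0 such that every eigenvalue of M lies in the interval [α, β] and every eigenvalue of L₂ lies in ℝ \ [α − δ, β + δ]. Then ‖X₂ᵀZ‖_F ≤ ‖R‖_F / δ. -/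
/-!
Because `A` is symmetric, `X₁ᵀ A X₂ = 0` and `X₁ X₁ᵀ + X₂ X₂ᵀ = 1`, we have `X₂ᵀ A = L₂ X₂ᵀ`,
so `S = X₂ᵀ Z` solves the Sylvester equation `L₂ S - S M = X₂ᵀ R`. Diagonalising `L₂ = U D Uᵀ`
and `M = V E Vᵀ` orthogonally, `T = Uᵀ S V` satisfies
`(dᵢ - eⱼ) Tᵢⱼ = (Uᵀ X₂ᵀ R V)ᵢⱼ` with `|dᵢ - eⱼ| ≥ δ` by the spectral hypotheses. The Frobenius norm
is invariant under the orthogonal factors, hence `δ ‖S‖_F ≤ ‖X₂ᵀ R‖_F ≤ ‖R‖_F`.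
-/

open Matrix

/-- The Frobenius norm of a real matrix. -/
noncomputable def frobNorm {m n : ℕ} (M : Matrix (Fin m) (Fin n) ℝ) : ℝ :=
  Real.sqrt (∑ x, ∑ y, (M x y) ^ 2)

attribute [local instance] Matrix.frobeniusNormedAddCommGroup

namespace Matrix

variable {k l m n : Type*} [Fintype k] [Fintype l] [Fintype m] [Fintype n]

theorem frobenius_norm_sq_eq_sum (M : Matrix m n ℝ) : ‖M‖ ^ 2 = ∑ i, ∑ j, M i j ^ 2 := by
  rw [frobenius_norm_def, ← Real.sqrt_eq_rpow, Real.sq_sqrt (by positivity)]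
  simp

theorem frobenius_norm_sq_eq_trace (M : Matrix m n ℝ) : ‖M‖ ^ 2 = trace (Mᵀ * M) := by
  rw [frobenius_norm_sq_eq_sum, Finset.sum_comm]
  simp [trace, mul_apply, sq]

theorem frobenius_norm_mul_of_transpose_mul_self_eq_one [DecidableEq m] {Q : Matrix l m ℝ}
    (hQ : Qᵀ * Q = 1) (M : Matrix m n ℝ) : ‖Q * M‖ = ‖M‖ := by
  refine (sq_eq_sq₀ (norm_nonneg _) (norm_nonneg _)).mp ?_
  rw [frobenius_norm_sq_eq_trace, frobenius_norm_sq_eq_trace, transpose_mul, Matrix.mul_assoc,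
    ← Matrix.mul_assoc Qᵀ, hQ, Matrix.one_mul]

theorem frobenius_norm_mul_of_mul_transpose_self_eq_one [DecidableEq n] (M : Matrix m n ℝ)
    {V : Matrix n l ℝ} (hV : V * Vᵀ = 1) : ‖M * V‖ = ‖M‖ := by
  rw [← frobenius_norm_transpose, transpose_mul,
    frobenius_norm_mul_of_transpose_mul_self_eq_one (by rwa [transpose_transpose]),
    frobenius_norm_transpose]

theorem frobenius_norm_transpose_mul_le [DecidableEq m] {X₁ : Matrix m l ℝ} {X₂ : Matrix m n ℝ}
    (hX : X₁ * X₁ᵀ + X₂ * X₂ᵀ = 1) (R : Matrix m k ℝ) : ‖X₂ᵀ * R‖ ≤ ‖R‖ := by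
  have hsplit : ‖R‖ ^ 2 = ‖X₁ᵀ * R‖ ^ 2 + ‖X₂ᵀ * R‖ ^ 2 := by
    simp only [frobenius_norm_sq_eq_trace, transpose_mul, transpose_transpose, ← trace_add]
    rw [Matrix.mul_assoc, Matrix.mul_assoc, ← Matrix.mul_assoc X₁, ← Matrix.mul_assoc X₂,
      ← Matrix.mul_add, ← Matrix.add_mul, hX, Matrix.one_mul]
  exact le_of_sq_le_sq (by nlinarith [sq_nonneg ‖X₁ᵀ * R‖]) (norm_nonneg R)

theorem mul_frobenius_norm_le_diagonal_mul_sub_mul_diagonal [DecidableEq m] [DecidableEq n]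
    {d : m → ℝ} {e : n → ℝ} {δ : ℝ} (hδ : 0 ≤ δ) (hgap : ∀ i j, δ ≤ |d i - e j|)
    (T : Matrix m n ℝ) :
    δ * ‖T‖ ≤ ‖diagonal d * T - T * diagonal e‖ := by
  have hentry : ∀ i j, (diagonal d * T - T * diagonal e) i j = (d i - e j) * T i j := by
    intro i j
    simp only [sub_apply, diagonal_mul, mul_diagonal]
    ring
  refine le_of_sq_le_sq ?_ (norm_nonneg _)
  rw [mul_pow, frobenius_norm_sq_eq_sum, frobenius_norm_sq_eq_sum, Finset.mul_sum]
  refine Finset.sum_le_sum fun i _ ↦ ?_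
  rw [Finset.mul_sum]
  refine Finset.sum_le_sum fun j _ ↦ ?_
  rw [hentry, mul_pow, ← sq_abs (d i - e j)]
  gcongr
  exact hgap i j

theorem IsHermitian.exists_orthogonal_diagonal [DecidableEq n] {A : Matrix n n ℝ}
    (hA : A.IsHermitian) :
    ∃ U : Matrix n n ℝ, Uᵀ * U = 1 ∧ U * Uᵀ = 1 ∧ A = U * diagonal hA.eigenvalues * Uᵀ := by
  set U : Matrix n n ℝ := (hA.eigenvectorUnitary : Matrix n n ℝ)
  have hstar : star U = Uᵀ := conjTranspose_eq_transpose_of_trivial U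
  refine ⟨U, ?_, ?_, ?_⟩
  · rw [← hstar]; exact mem_unitaryGroup_iff'.mp hA.eigenvectorUnitary.2
  · rw [← hstar]; exact mem_unitaryGroup_iff.mp hA.eigenvectorUnitary.2
  · rw [← hstar]
    simpa [Unitary.conjStarAlgAut_apply] using hA.spectral_theorem

theorem IsHermitian.mul_frobenius_norm_le_norm_mul_sub_mul [DecidableEq m] [DecidableEq n]
    {L : Matrix m m ℝ} {M : Matrix n n ℝ} (hL : L.IsHermitian) (hM : M.IsHermitian) {δ : ℝ}
    (hδ : 0 ≤ δ) (hgap : ∀ μ ∈ spectrum ℝ L, ∀ ν ∈ spectrum ℝ M, δ ≤ |μ - ν|)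
    (S : Matrix m n ℝ) : δ * ‖S‖ ≤ ‖L * S - S * M‖ := by
  obtain ⟨U, hUU, hUU', hLU⟩ := hL.exists_orthogonal_diagonal
  obtain ⟨V, hVV, hVV', hMV⟩ := hM.exists_orthogonal_diagonal
  set T := Uᵀ * S * V
  have hS : S = U * T * Vᵀ := by
    simp only [T, ← Matrix.mul_assoc, hUU', Matrix.one_mul]
    rw [Matrix.mul_assoc, hVV', Matrix.mul_one]
  have hU : ∀ X : Matrix m n ℝ, Uᵀ * (U * X) = X := fun X ↦ by
    rw [← Matrix.mul_assoc, hUU, Matrix.one_mul]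
  have hV : ∀ X : Matrix n n ℝ, Vᵀ * (V * X) = X := fun X ↦ by
    rw [← Matrix.mul_assoc, hVV, Matrix.one_mul]
  have hsyl : L * S - S * M =
      U * (diagonal hL.eigenvalues * T - T * diagonal hM.eigenvalues) * Vᵀ := by
    conv_lhs => rw [hLU, hMV, hS]
    simp only [Matrix.mul_sub, Matrix.sub_mul, Matrix.mul_assoc, hU, hV]
  calc δ * ‖S‖ = δ * ‖T‖ := by
        rw [frobenius_norm_mul_of_mul_transpose_self_eq_one _ hVV',
          frobenius_norm_mul_of_transpose_mul_self_eq_one (by rwa [transpose_transpose])]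
    _ ≤ ‖diagonal hL.eigenvalues * T - T * diagonal hM.eigenvalues‖ :=
        mul_frobenius_norm_le_diagonal_mul_sub_mul_diagonal hδ (fun i j ↦
          hgap _ (hL.eigenvalues_mem_spectrum_real i) _ (hM.eigenvalues_mem_spectrum_real j)) T
    _ = ‖L * S - S * M‖ := by
        rw [hsyl, frobenius_norm_mul_of_mul_transpose_self_eq_one _ (by rwa [transpose_transpose]),
          frobenius_norm_mul_of_transpose_mul_self_eq_one hUU]

theorem transpose_mul_sub_mul_eq {α : Type*} [Ring α] [DecidableEq m] {A : Matrix m m α}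
    {X₁ : Matrix m l α} {X₂ : Matrix m n α} (hX : X₁ * X₁ᵀ + X₂ * X₂ᵀ = 1)
    (hAX : X₂ᵀ * A * X₁ = 0) (Z : Matrix m k α) (M : Matrix k k α) :
    X₂ᵀ * (A * Z - Z * M) = X₂ᵀ * A * X₂ * (X₂ᵀ * Z) - X₂ᵀ * Z * M := by
  have hXA : X₂ᵀ * A = X₂ᵀ * A * X₂ * X₂ᵀ := calc
    X₂ᵀ * A = X₂ᵀ * A * (X₁ * X₁ᵀ + X₂ * X₂ᵀ) := by rw [hX, Matrix.mul_one]
    _ = X₂ᵀ * A * X₂ * X₂ᵀ := by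
      rw [Matrix.mul_add, ← Matrix.mul_assoc _ X₁, hAX, Matrix.zero_mul, zero_add,
        ← Matrix.mul_assoc]
  rw [Matrix.mul_sub, ← Matrix.mul_assoc X₂ᵀ A Z]
  conv_lhs => rw [hXA]
  simp only [Matrix.mul_assoc]

end Matrix

theorem le_abs_sub_of_mem_Icc_of_notMem_Icc {a b δ x y : ℝ} (hy : y ∈ Set.Icc a b)
    (hx : x ∉ Set.Icc (a - δ) (b + δ)) : δ ≤ |x - y| := by
  rw [Set.mem_Icc, not_and_or, not_le, not_le] at hx
  obtain ⟨hay, hyb⟩ := hy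
  rcases hx with hx | hx
  · exact le_abs.mpr (Or.inr (by linarith))
  · exact le_abs.mpr (Or.inl (by linarith))

theorem frobNorm_eq_norm {m n : ℕ} (M : Matrix (Fin m) (Fin n) ℝ) : frobNorm M = ‖M‖ := by
  rw [frobNorm, ← frobenius_norm_sq_eq_sum, Real.sqrt_sq (norm_nonneg M)]

theorem davis_kahan_sin_theta_frobenius_general
    (n ρ : ℕ)
    (A : Matrix (Fin n) (Fin n) ℝ) (hA : A.IsSymm)
    (X₁ : Matrix (Fin n) (Fin ρ) ℝ) (X₂ : Matrix (Fin n) (Fin (n - ρ)) ℝ)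
    (hcomplete : X₁ * X₁ᵀ + X₂ * X₂ᵀ = 1)
    (hblock : X₁ᵀ * A * X₂ = 0)
    (Z : Matrix (Fin n) (Fin ρ) ℝ)
    (M : Matrix (Fin ρ) (Fin ρ) ℝ) (hM : M.IsSymm)
    (R : Matrix (Fin n) (Fin ρ) ℝ) (hR : R = A * Z - Z * M)
    (α β δ : ℝ) (hδ : 0 < δ)
    (hMspec : spectrum ℝ M ⊆ Set.Icc α β)
    (hL₂spec : ∀ μ ∈ spectrum ℝ (X₂ᵀ * A * X₂), μ ∉ Set.Icc (α - δ) (β + δ)) :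
    frobNorm (X₂ᵀ * Z) ≤ frobNorm R / δ := by
  have hAX : X₂ᵀ * A * X₁ = 0 := by
    simpa [transpose_mul, hA.eq, Matrix.mul_assoc] using congrArg transpose hblock
  have hL₂ : (X₂ᵀ * A * X₂).IsHermitian := by
    simpa [conjTranspose_eq_transpose_of_trivial] using
      isHermitian_conjTranspose_mul_mul X₂ (isHermitian_iff_isSymm.mpr hA)
  have hsep := hL₂.mul_frobenius_norm_le_norm_mul_sub_mul (isHermitian_iff_isSymm.mpr hM) hδ.le
    (fun μ hμ ν hν ↦ le_abs_sub_of_mem_Icc_of_notMem_Icc (hMspec hν) (hL₂spec μ hμ)) (X₂ᵀ * Z)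
  rw [← transpose_mul_sub_mul_eq hcomplete hAX, ← hR] at hsep
  rw [frobNorm_eq_norm, frobNorm_eq_norm, le_div_iff₀' hδ]
  exact hsep.trans (frobenius_norm_transpose_mul_le hcomplete R)

/-- Davis–Kahan sinΘ theorem, Frobenius-norm case. -/
theorem davis_kahan_sin_theta_frobenius
    (n ρ : ℕ)
    (A : Matrix (Fin n) (Fin n) ℝ) (hA : A.IsSymm)
    (X₁ : Matrix (Fin n) (Fin ρ) ℝ) (X₂ : Matrix (Fin n) (Fin (n - ρ)) ℝ)
    (hX₁ : X₁ᵀ * X₁ = 1) (hX₂ : X₂ᵀ * X₂ = 1) (hX₁₂ : X₁ᵀ * X₂ = 0)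
    (hcomplete : X₁ * X₁ᵀ + X₂ * X₂ᵀ = 1)
    (hblock : X₁ᵀ * A * X₂ = 0)
    (Z : Matrix (Fin n) (Fin ρ) ℝ) (hZ : Zᵀ * Z = 1)
    (M : Matrix (Fin ρ) (Fin ρ) ℝ) (hM : M.IsSymm)
    (R : Matrix (Fin n) (Fin ρ) ℝ) (hR : R = A * Z - Z * M)
    (α β δ : ℝ) (hαβ : α ≤ β) (hδ : 0 < δ)
    (hMspec : spectrum ℝ M ⊆ Set.Icc α β)
    (hL₂spec : ∀ μ ∈ spectrum ℝ (X₂ᵀ * A * X₂), μ ∉ Set.Icc (α - δ) (β + δ)) :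
    frobNorm (X₂ᵀ * Z) ≤ frobNorm R / δ :=
  davis_kahan_sin_theta_frobenius_general n ρ A hA X₁ X₂ hcomplete hblock Z M hM R hR α β δ hδ
    hMspec hL₂spec
end

section
/- Let A be an n×n real symmetric matrix and let X₁ ∈ ℝ^{n×ρ} and X₂ ∈ ℝ^{n×(n−ρ)} be matrices such that the block matrix [X₁ X₂] is orthogonal and X₁ᵀAX₂ = 0 (so that, writing L₁ = X₁ᵀAX₁ and L₂ = X₂ᵀAX₂, the pair gives a spectral resolution [X₁ X₂]ᵀ A [X₁ X₂] = diag(L₁, L₂)). Let Z ∈ ℝ^{n×ρ} have orthonormal columns (ZᵀZ = I_ρ), let M be a ρ×ρ real symmetric matrix, and define the residual R = AZ − ZM. Suppose there exist reals α ≤ β and δ > 0 such that every eigenvalue of M lies in the interval [α, β] and every eigenvalue of L₂ lies in ℝ \ [α − δ, β + δ]. Then ‖X₂ᵀZ‖₂ ≤ ‖R‖₂ / δ. -/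
/-!
Because `X₁ᵀ A X₂ = 0`, the range of `X₂` is `A`-invariant: `X₂ᵀ A = L₂ X₂ᵀ`. Hence
`S = X₂ᵀ Z` solves the Sylvester equation `L₂ S - S M = X₂ᵀ R`. Shifting both sides by the
midpoint `c` of `[α, β]`, the operator `L₂ - c` expands every vector by at least `r + δ`
(`r = (β - α) / 2`) while `M - c` expands none by more than `r`, so
`(r + δ) ‖S‖ ≤ ‖X₂ᵀ R‖ + r ‖S‖`. Finally `‖X₂ᵀ R‖ ≤ ‖R‖` because `X₂` has orthonormal columns.
-/

open Matrix

/-- The spectral norm (operator 2-norm, largest singular value) of a real matrix: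
the supremum of the Euclidean norm of `M.mulVec x` over the Euclidean unit ball. -/
noncomputable def specNorm {m n : ℕ} (M : Matrix (Fin m) (Fin n) ℝ) : ℝ :=
  sSup {r : ℝ | ∃ x : Fin n → ℝ, (∑ i, (x i) ^ 2) ≤ 1 ∧
    r = Real.sqrt (∑ j, (M.mulVec x j) ^ 2)}

open Module End

namespace LinearMap.IsSymmetric

variable {𝕜 E : Type*} [RCLike 𝕜] [NormedAddCommGroup E] [InnerProductSpace 𝕜 E]
  [FiniteDimensional 𝕜 E] {T : E →ₗ[𝕜] E}

theorem norm_apply_sub_smul_sq (hT : T.IsSymmetric) (c : ℝ) (x : E) :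
    ‖T x - (c : 𝕜) • x‖ ^ 2 =
      ∑ i, (hT.eigenvalues rfl i - c) ^ 2 * ‖(hT.eigenvectorBasis rfl).repr x i‖ ^ 2 := by
  rw [← (hT.eigenvectorBasis rfl).repr.norm_map, EuclideanSpace.norm_sq_eq]
  congr! 1 with i
  rw [map_sub, map_smul, PiLp.sub_apply, PiLp.smul_apply, eigenvectorBasis_apply_self_apply,
    smul_eq_mul, ← sub_mul, norm_mul, mul_pow, ← RCLike.ofReal_sub, RCLike.norm_ofReal, sq_abs]

theorem norm_apply_sub_smul_le (hT : T.IsSymmetric) {c r : ℝ} (hr : 0 ≤ r)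
    (h : ∀ μ : ℝ, HasEigenvalue T μ → |μ - c| ≤ r) (x : E) :
    ‖T x - (c : 𝕜) • x‖ ≤ r * ‖x‖ := by
  refine le_of_sq_le_sq ?_ (by positivity)
  rw [mul_pow, hT.norm_apply_sub_smul_sq, ← (hT.eigenvectorBasis rfl).repr.norm_map x,
    EuclideanSpace.norm_sq_eq, Finset.mul_sum]
  gcongr ∑ _, ?_ * _ with i
  rw [← sq_abs]
  gcongr
  exact h _ (hT.hasEigenvalue_eigenvalues rfl i)

theorem le_norm_apply_sub_smul (hT : T.IsSymmetric) {c s : ℝ} (hs : 0 ≤ s)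
    (h : ∀ μ : ℝ, HasEigenvalue T μ → s ≤ |μ - c|) (x : E) :
    s * ‖x‖ ≤ ‖T x - (c : 𝕜) • x‖ := by
  refine le_of_sq_le_sq ?_ (by positivity)
  rw [mul_pow, hT.norm_apply_sub_smul_sq, ← (hT.eigenvectorBasis rfl).repr.norm_map x,
    EuclideanSpace.norm_sq_eq, Finset.mul_sum]
  gcongr ∑ _, ?_ * _ with i
  rw [← sq_abs (_ - c)]
  gcongr
  exact h _ (hT.hasEigenvalue_eigenvalues rfl i)

end LinearMap.IsSymmetric

section Separation

variable {𝕜 E F : Type*} [RCLike 𝕜] [NormedAddCommGroup E] [InnerProductSpace 𝕜 E]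
  [FiniteDimensional 𝕜 E] [NormedAddCommGroup F] [InnerProductSpace 𝕜 F] [FiniteDimensional 𝕜 F]

theorem ContinuousLinearMap.mul_opNorm_le_opNorm_comp_sub_comp {L : F →L[𝕜] F} {M : E →L[𝕜] E}
    (hL : (L : F →ₗ[𝕜] F).IsSymmetric) (hM : (M : E →ₗ[𝕜] E).IsSymmetric) {c r δ : ℝ}
    (hr : 0 ≤ r) (hδ : 0 < δ) (hMspec : ∀ μ : ℝ, HasEigenvalue (M : E →ₗ[𝕜] E) μ → |μ - c| ≤ r)
    (hLspec : ∀ μ : ℝ, HasEigenvalue (L : F →ₗ[𝕜] F) μ → r + δ ≤ |μ - c|) (S : E →L[𝕜] F) :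
    δ * ‖S‖ ≤ ‖L ∘L S - S ∘L M‖ := by
  have hbound (x : E) : (r + δ) * ‖S x‖ ≤ (‖L ∘L S - S ∘L M‖ + r * ‖S‖) * ‖x‖ :=
    calc (r + δ) * ‖S x‖ ≤ ‖L (S x) - (c : 𝕜) • S x‖ :=
          hL.le_norm_apply_sub_smul (by positivity) hLspec _
      _ = ‖(L ∘L S - S ∘L M) x + S (M x - (c : 𝕜) • x)‖ := by
          congr 1
          simp only [_root_.sub_apply, ContinuousLinearMap.comp_apply, map_sub, map_smul]
          abel
      _ ≤ ‖L ∘L S - S ∘L M‖ * ‖x‖ + ‖S‖ * (r * ‖x‖) :=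
          (norm_add_le _ _).trans <| add_le_add ((L ∘L S - S ∘L M).le_opNorm x) <|
            (S.le_opNorm _).trans <| by gcongr; exact hM.norm_apply_sub_smul_le hr hMspec x
      _ = (‖L ∘L S - S ∘L M‖ + r * ‖S‖) * ‖x‖ := by ring
  have hS : ‖S‖ ≤ (‖L ∘L S - S ∘L M‖ + r * ‖S‖) / (r + δ) :=
    S.opNorm_le_bound (by positivity) fun x ↦ by
      rw [div_mul_eq_mul_div, le_div_iff₀' (by positivity)]
      exact hbound x
  rw [le_div_iff₀' (by positivity)] at hS
  linarith

end Separation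

open scoped Matrix.Norms.L2Operator

namespace Matrix

variable {𝕜 : Type*} [RCLike 𝕜] {m n : Type*} [Fintype m] [Fintype n] [DecidableEq n]

theorem mem_spectrum_real_of_hasEigenvalue {A : Matrix n n 𝕜} {μ : ℝ}
    (h : HasEigenvalue (toEuclideanLin A) (μ : 𝕜)) : μ ∈ spectrum ℝ A :=
  spectrum.of_algebraMap_mem 𝕜 (spectrum_toLpLin (A := A) 2 ▸ h.mem_spectrum)

theorem mul_l2_opNorm_le_l2_opNorm_mul_sub_mul [DecidableEq m] {L : Matrix m m 𝕜}
    {M : Matrix n n 𝕜} (hL : L.IsHermitian) (hM : M.IsHermitian) {α β δ : ℝ} (hαβ : α ≤ β)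
    (hδ : 0 < δ) (hMspec : spectrum ℝ M ⊆ Set.Icc α β)
    (hLspec : ∀ μ ∈ spectrum ℝ L, μ ∉ Set.Ioo (α - δ) (β + δ)) (S : Matrix m n 𝕜) :
    δ * ‖S‖ ≤ ‖L * S - S * M‖ := by
  have hM' (μ : ℝ) (hμ : HasEigenvalue (toEuclideanLin M) (μ : 𝕜)) :
      |μ - (α + β) / 2| ≤ (β - α) / 2 := by
    obtain ⟨h₁, h₂⟩ := hMspec (mem_spectrum_real_of_hasEigenvalue hμ)
    rw [abs_le]
    constructor <;> linarith
  have hL' (μ : ℝ) (hμ : HasEigenvalue (toEuclideanLin L) (μ : 𝕜)) :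
      (β - α) / 2 + δ ≤ |μ - (α + β) / 2| := by
    have h := hLspec μ (mem_spectrum_real_of_hasEigenvalue hμ)
    rw [Set.mem_Ioo, not_and_or, not_lt, not_lt] at h
    rw [le_abs]
    rcases h with h | h
    · right; linarith
    · left; linarith
  refine (ContinuousLinearMap.mul_opNorm_le_opNorm_comp_sub_comp
    (L := (toEuclideanLin L).toContinuousLinearMap) (M := (toEuclideanLin M).toContinuousLinearMap)
    (isSymmetric_toEuclideanLin_iff.2 hL) (isSymmetric_toEuclideanLin_iff.2 hM)
    (by linarith) hδ hM' hL' (toEuclideanLin S).toContinuousLinearMap).trans_eq ?_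
  rw [l2_opNorm_def]
  congr 1
  ext x : 1
  simp

theorem l2_opNorm_le_one_of_conjTranspose_mul_self_eq_one {A : Matrix m n 𝕜} (h : Aᴴ * A = 1) :
    ‖A‖ ≤ 1 := by
  have hone : ‖(1 : Matrix n n 𝕜)‖ ≤ 1 := by
    rw [l2_opNorm_def, LinearEquiv.trans_apply, toLpLin_one]
    exact ContinuousLinearMap.norm_id_le
  rw [← h, l2_opNorm_conjTranspose_mul_self] at hone
  nlinarith [norm_nonneg A]

theorem transpose_mul_eq_compression_mul_transpose {R : Type*} [CommRing R] {k l : Type*}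
    [Fintype k] [Fintype l] {A : Matrix n n R} (hA : A.IsSymm) {X₁ : Matrix n k R}
    {X₂ : Matrix n l R} (hcomplete : X₁ * X₁ᵀ + X₂ * X₂ᵀ = 1) (hblock : X₁ᵀ * A * X₂ = 0) :
    X₂ᵀ * A = X₂ᵀ * A * X₂ * X₂ᵀ := by
  have hblock' : X₂ᵀ * A * X₁ = 0 := by
    simpa [transpose_mul, hA.eq, Matrix.mul_assoc] using congrArg transpose hblock
  calc X₂ᵀ * A = X₂ᵀ * A * (X₁ * X₁ᵀ + X₂ * X₂ᵀ) := by rw [hcomplete, Matrix.mul_one]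
    _ = X₂ᵀ * A * X₁ * X₁ᵀ + X₂ᵀ * A * X₂ * X₂ᵀ := by simp only [Matrix.mul_add, Matrix.mul_assoc]
    _ = X₂ᵀ * A * X₂ * X₂ᵀ := by rw [hblock', Matrix.zero_mul, zero_add]

end Matrix

theorem specNorm_eq_l2_opNorm {m n : ℕ} (B : Matrix (Fin m) (Fin n) ℝ) : specNorm B = ‖B‖ := by
  rw [l2_opNorm_def, ← ContinuousLinearMap.sSup_unitClosedBall_eq_norm, specNorm]
  congr 1
  ext r
  simp only [Set.mem_ofPred_eq, Set.mem_image, Metric.mem_closedBall, dist_zero_right,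
    EuclideanSpace.norm_eq, Real.norm_eq_abs, sq_abs]
  constructor
  · rintro ⟨x, hx, rfl⟩
    exact ⟨WithLp.toLp 2 x, by simpa using hx, rfl⟩
  · rintro ⟨x, hx, rfl⟩
    exact ⟨x.ofLp, by simpa using hx, rfl⟩

theorem davis_kahan_sin_theta_spectral_general
    (n ρ : ℕ)
    (A : Matrix (Fin n) (Fin n) ℝ) (hA : A.IsSymm)
    (X₁ : Matrix (Fin n) (Fin ρ) ℝ) (X₂ : Matrix (Fin n) (Fin (n - ρ)) ℝ)
    (hX₂ : X₂ᵀ * X₂ = 1)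
    (hcomplete : X₁ * X₁ᵀ + X₂ * X₂ᵀ = 1)
    (hblock : X₁ᵀ * A * X₂ = 0)
    (Z : Matrix (Fin n) (Fin ρ) ℝ)
    (M : Matrix (Fin ρ) (Fin ρ) ℝ) (hM : M.IsSymm)
    (R : Matrix (Fin n) (Fin ρ) ℝ) (hR : R = A * Z - Z * M)
    (α β δ : ℝ) (hαβ : α ≤ β) (hδ : 0 < δ)
    (hMspec : spectrum ℝ M ⊆ Set.Icc α β)
    (hL₂spec : ∀ μ ∈ spectrum ℝ (X₂ᵀ * A * X₂), μ ∉ Set.Icc (α - δ) (β + δ)) :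
    specNorm (X₂ᵀ * Z) ≤ specNorm R / δ := by
  have hL₂ : (X₂ᵀ * A * X₂).IsHermitian := by
    simpa [conjTranspose_eq_transpose_of_trivial] using
      isHermitian_conjTranspose_mul_mul X₂ (isHermitian_iff_isSymm.2 hA)
  have hres : X₂ᵀ * R = X₂ᵀ * A * X₂ * (X₂ᵀ * Z) - X₂ᵀ * Z * M := by
    rw [hR, Matrix.mul_sub, ← Matrix.mul_assoc, ← Matrix.mul_assoc, ← Matrix.mul_assoc _ X₂ᵀ,
      ← transpose_mul_eq_compression_mul_transpose hA hcomplete hblock]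
  have hX₂_norm : ‖X₂ᵀ‖ ≤ 1 := by
    rw [← conjTranspose_eq_transpose_of_trivial, l2_opNorm_conjTranspose]
    exact l2_opNorm_le_one_of_conjTranspose_mul_self_eq_one hX₂
  rw [specNorm_eq_l2_opNorm, specNorm_eq_l2_opNorm, le_div_iff₀' hδ]
  calc δ * ‖X₂ᵀ * Z‖ ≤ ‖X₂ᵀ * R‖ := hres ▸ mul_l2_opNorm_le_l2_opNorm_mul_sub_mul hL₂
        (isHermitian_iff_isSymm.2 hM) hαβ hδ hMspec
        (fun μ hμ h ↦ hL₂spec μ hμ (Set.Ioo_subset_Icc_self h)) _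
    _ ≤ ‖X₂ᵀ‖ * ‖R‖ := l2_opNorm_mul _ _
    _ ≤ ‖R‖ := mul_le_of_le_one_left (norm_nonneg _) hX₂_norm

/-- Davis–Kahan sinΘ theorem, spectral-norm case. -/
theorem davis_kahan_sin_theta_spectral
    (n ρ : ℕ)
    (A : Matrix (Fin n) (Fin n) ℝ) (hA : A.IsSymm)
    (X₁ : Matrix (Fin n) (Fin ρ) ℝ) (X₂ : Matrix (Fin n) (Fin (n - ρ)) ℝ)
    (hX₁ : X₁ᵀ * X₁ = 1) (hX₂ : X₂ᵀ * X₂ = 1) (hX₁₂ : X₁ᵀ * X₂ = 0)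
    (hcomplete : X₁ * X₁ᵀ + X₂ * X₂ᵀ = 1)
    (hblock : X₁ᵀ * A * X₂ = 0)
    (Z : Matrix (Fin n) (Fin ρ) ℝ) (hZ : Zᵀ * Z = 1)
    (M : Matrix (Fin ρ) (Fin ρ) ℝ) (hM : M.IsSymm)
    (R : Matrix (Fin n) (Fin ρ) ℝ) (hR : R = A * Z - Z * M)
    (α β δ : ℝ) (hαβ : α ≤ β) (hδ : 0 < δ)
    (hMspec : spectrum ℝ M ⊆ Set.Icc α β)
    (hL₂spec : ∀ μ ∈ spectrum ℝ (X₂ᵀ * A * X₂), μ ∉ Set.Icc (α - δ) (β + δ)) :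
    specNorm (X₂ᵀ * Z) ≤ specNorm R / δ :=
  davis_kahan_sin_theta_spectral_general n ρ A hA X₁ X₂ hX₂ hcomplete hblock Z M hM R hR α β δ hαβ
    hδ hMspec hL₂spec
end

section
/- Let A and E be n×n real symmetric matrices and set Ã = A + E. Let λ₁ ≤ λ₂ ≤ ⋯ ≤ λₙ be the eigenvalues of A with a corresponding orthonormal basis of eigenvectors u₁, …, uₙ, and let λ̃₁ ≤ ⋯ ≤ λ̃ₙ be the eigenvalues of Ã with orthonormal eigenvectors ũ₁, …, ũₙ. Fix 1 ≤ ρ < n and assume λ̃_{ρ+1} > λ_ρ. Let U₁ = [u₁ ⋯ u_ρ] and Ũ₂ = [ũ_{ρ+1} ⋯ ũₙ]. Let μ₁ ≥ μ₂ ≥ ⋯ ≥ μₙ be the eigenvalues of EᵀE listed in decreasing order. Then ‖Ũ₂ᵀU₁‖_F ≤ √(μ₁ + μ₂ + ⋯ + μ_ρ) / (λ̃_{ρ+1} − λ_ρ). -/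
/-!
For `k > ρ ≥ j`, testing `Ã ũₖ = λ̃ₖ ũₖ` and `A uⱼ = λⱼ uⱼ` against each other gives
`ũₖᵀ E uⱼ = (λ̃ₖ - λⱼ) ũₖᵀ uⱼ` with `λ̃ₖ - λⱼ ≥ δ := λ̃_{ρ+1} - λ_ρ`. Summing, and completing the
sum over `k` to all of the basis `ũ` (Parseval), `δ² ‖Ũ₂ᵀU₁‖_F² ≤ ∑_{j ≤ ρ} ‖E uⱼ‖²
= ∑_{j ≤ ρ} uⱼᵀ EᵀE uⱼ`. In the eigenbasis `w` of `EᵀE` this is `∑ₖ μₖ dₖ` with weights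
`dₖ = ∑_{j ≤ ρ} (wₖᵀ uⱼ)² ∈ [0, 1]` summing to `ρ`, so it is at most `μ₁ + ⋯ + μ_ρ` (Ky Fan).
-/

open Matrix

open Finset

theorem Finset.sum_mul_le_sum_of_threshold {ι : Type*} [Fintype ι] [DecidableEq ι]
    (S : Finset ι) {μ d : ι → ℝ} (t : ℝ)
    (hμS : ∀ k ∈ S, t ≤ μ k) (hμSc : ∀ k ∉ S, μ k ≤ t)
    (hd₀ : ∀ k, 0 ≤ d k) (hd₁ : ∀ k, d k ≤ 1) (hd : ∑ k, d k = #S) :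
    ∑ k, μ k * d k ≤ ∑ k ∈ S, μ k := by
  have hterm : ∀ k, (μ k - t) * d k ≤ if k ∈ S then μ k - t else 0 := by
    intro k
    split_ifs with hk
    · exact mul_le_of_le_one_right (sub_nonneg.mpr (hμS k hk)) (hd₁ k)
    · exact mul_nonpos_of_nonpos_of_nonneg (sub_nonpos.mpr (hμSc k hk)) (hd₀ k)
  have hshifted := sum_le_sum fun k (_ : k ∈ univ) => hterm k
  rw [sum_ite_mem, univ_inter, sum_sub_distrib, sum_const, nsmul_eq_mul] at hshifted
  simp only [sub_mul, sum_sub_distrib, ← mul_sum, hd] at hshifted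
  linarith

section

variable {ι : Type*} [Fintype ι]

theorem Matrix.mulVec_dotProduct_mulVec_self (E : Matrix ι ι ℝ) (v : ι → ℝ) :
    E *ᵥ v ⬝ᵥ E *ᵥ v = v ⬝ᵥ (Eᵀ * E) *ᵥ v := by
  rw [dotProduct_mulVec, ← mulVec_transpose, mulVec_mulVec, dotProduct_comm]

theorem Matrix.dotProduct_sub_mulVec_of_eigenvectors {A B : Matrix ι ι ℝ} (hB : B.IsSymm)
    {a b : ℝ} {x y : ι → ℝ} (hx : B *ᵥ x = a • x) (hy : A *ᵥ y = b • y) :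
    x ⬝ᵥ (B - A) *ᵥ y = (a - b) * (x ⬝ᵥ y) := by
  rw [sub_mulVec, dotProduct_sub, hy, dotProduct_mulVec, ← mulVec_transpose, hB.eq, hx,
    smul_dotProduct, dotProduct_smul, smul_eq_mul, smul_eq_mul, sub_mul]

variable [DecidableEq ι]

theorem Matrix.transpose_of_mul_of_eq_one {b : ι → ι → ℝ}
    (hb : ∀ i j, b i ⬝ᵥ b j = if i = j then 1 else 0) : (of b)ᵀ * of b = 1 := by
  refine mul_eq_one_comm.mp ?_
  ext i j
  simpa [mul_apply, one_apply, dotProduct] using hb i j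

theorem Matrix.sum_sq_dotProduct_of_orthonormal {b : ι → ι → ℝ}
    (hb : ∀ i j, b i ⬝ᵥ b j = if i = j then 1 else 0) (v : ι → ℝ) :
    ∑ j, (b j ⬝ᵥ v) ^ 2 = v ⬝ᵥ v := by
  calc ∑ j, (b j ⬝ᵥ v) ^ 2 = of b *ᵥ v ⬝ᵥ of b *ᵥ v := by
        simp only [dotProduct, sq]; rfl
    _ = v ⬝ᵥ v := by
        rw [dotProduct_mulVec, ← mulVec_transpose, mulVec_mulVec,
          transpose_of_mul_of_eq_one hb, one_mulVec]

theorem Matrix.dotProduct_mulVec_eq_sum_eigenvalues {M : Matrix ι ι ℝ} {μ : ι → ℝ}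
    {w : ι → ι → ℝ} (hw : ∀ i j, w i ⬝ᵥ w j = if i = j then 1 else 0)
    (hM : ∀ k, M *ᵥ w k = μ k • w k)
    (v : ι → ℝ) : v ⬝ᵥ M *ᵥ v = ∑ k, μ k * (w k ⬝ᵥ v) ^ 2 := by
  have hcolumns : M * (of w)ᵀ = (of w)ᵀ * diagonal μ := by
    ext x k
    rw [mul_diagonal]
    simpa [mul_apply, mulVec, dotProduct, mul_comm] using congrFun (hM k) x
  have hspectral : M = (of w)ᵀ * diagonal μ * of w := by
    rw [← hcolumns, Matrix.mul_assoc, transpose_of_mul_of_eq_one hw, Matrix.mul_one]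
  rw [hspectral, ← mulVec_mulVec, ← mulVec_mulVec, dotProduct_mulVec, vecMul_transpose]
  simp only [dotProduct, mulVec_diagonal, sq]
  refine sum_congr rfl fun k _ => ?_
  simp only [mulVec, dotProduct, of_apply]
  ring

theorem Matrix.sum_dotProduct_mulVec_le_sum_eigenvalues {M : Matrix ι ι ℝ} {μ : ι → ℝ}
    {w u : ι → ι → ℝ} (hw : ∀ i j, w i ⬝ᵥ w j = if i = j then 1 else 0)
    (hM : ∀ k, M *ᵥ w k = μ k • w k) (hu : ∀ i j, u i ⬝ᵥ u j = if i = j then 1 else 0)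
    (S : Finset ι) (t : ℝ) (hμS : ∀ k ∈ S, t ≤ μ k) (hμSc : ∀ k ∉ S, μ k ≤ t) :
    ∑ j ∈ S, u j ⬝ᵥ M *ᵥ u j ≤ ∑ k ∈ S, μ k := by
  have hweight : ∀ k, ∑ j ∈ S, (w k ⬝ᵥ u j) ^ 2 ≤ 1 := fun k =>
    calc ∑ j ∈ S, (w k ⬝ᵥ u j) ^ 2 ≤ ∑ j, (u j ⬝ᵥ w k) ^ 2 := by
          simp only [dotProduct_comm (w k)]
          exact sum_le_sum_of_subset_of_nonneg (subset_univ S) fun _ _ _ => sq_nonneg _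
      _ = 1 := by rw [sum_sq_dotProduct_of_orthonormal hu, hw, if_pos rfl]
  have htotal : ∑ k, ∑ j ∈ S, (w k ⬝ᵥ u j) ^ 2 = #S := by
    rw [sum_comm, card_eq_sum_ones, Nat.cast_sum]
    refine sum_congr rfl fun j _ => ?_
    rw [sum_sq_dotProduct_of_orthonormal hw, hu, if_pos rfl, Nat.cast_one]
  calc ∑ j ∈ S, u j ⬝ᵥ M *ᵥ u j = ∑ k, μ k * ∑ j ∈ S, (w k ⬝ᵥ u j) ^ 2 := by
        simp only [dotProduct_mulVec_eq_sum_eigenvalues hw hM, mul_sum]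
        exact sum_comm
    _ ≤ ∑ k ∈ S, μ k := sum_mul_le_sum_of_threshold S t hμS hμSc
        (fun k => sum_nonneg fun _ _ => sq_nonneg _) hweight htotal

theorem Matrix.sq_mul_sum_sq_dotProduct_le_of_eigengap {A E : Matrix ι ι ℝ} (hAE : (A + E).IsSymm)
    {lam tlam : ι → ℝ} {u tu : ι → ι → ℝ} (huEig : ∀ j, A *ᵥ u j = lam j • u j)
    (htuOrtho : ∀ i j, tu i ⬝ᵥ tu j = if i = j then 1 else 0)
    (htuEig : ∀ k, (A + E) *ᵥ tu k = tlam k • tu k)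
    (S T : Finset ι) {δ : ℝ} (hδ : 0 ≤ δ) (hgap : ∀ k ∈ T, ∀ j ∈ S, δ ≤ tlam k - lam j) :
    δ ^ 2 * ∑ k ∈ T, ∑ j ∈ S, (tu k ⬝ᵥ u j) ^ 2 ≤ ∑ j ∈ S, u j ⬝ᵥ (Eᵀ * E) *ᵥ u j := by
  have hentry : ∀ k j, tu k ⬝ᵥ E *ᵥ u j = (tlam k - lam j) * (tu k ⬝ᵥ u j) := fun k j => by
    simpa using dotProduct_sub_mulVec_of_eigenvectors hAE (htuEig k) (huEig j)
  calc δ ^ 2 * ∑ k ∈ T, ∑ j ∈ S, (tu k ⬝ᵥ u j) ^ 2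
      = ∑ j ∈ S, ∑ k ∈ T, δ ^ 2 * (tu k ⬝ᵥ u j) ^ 2 := by
        rw [mul_sum, sum_comm]; simp only [mul_sum]
    _ ≤ ∑ j ∈ S, ∑ k ∈ T, (tu k ⬝ᵥ E *ᵥ u j) ^ 2 := by
        refine sum_le_sum fun j hj => sum_le_sum fun k hk => ?_
        rw [hentry, mul_pow]
        gcongr
        exact hgap k hk j hj
    _ ≤ ∑ j ∈ S, ∑ k, (tu k ⬝ᵥ E *ᵥ u j) ^ 2 :=
        sum_le_sum fun j _ =>
          sum_le_sum_of_subset_of_nonneg (subset_univ T) fun _ _ _ => sq_nonneg _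
    _ = ∑ j ∈ S, u j ⬝ᵥ (Eᵀ * E) *ᵥ u j := by
        simp only [sum_sq_dotProduct_of_orthonormal htuOrtho, mulVec_dotProduct_mulVec_self]

end

/-- Frobenius-norm claim of the perturbation lemma (Lemma 3 of the paper):
for symmetric `A` and `Ã = A + E` with ordered eigenvalues and orthonormal
eigenvector bases, the sines of the canonical angles between the leading
`ρ`-dimensional eigenspaces satisfy
`‖Ũ₂ᵀU₁‖_F ≤ √(μ₁ + ⋯ + μ_ρ) / (λ̃_{ρ+1} − λ_ρ)`,
where the `μ`'s are the decreasingly ordered eigenvalues of `EᵀE`. -/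
theorem perturbation_lemma_frobenius
    (n ρ : ℕ) (hρn : ρ < n)
    (A E : Matrix (Fin n) (Fin n) ℝ) (hA : A.IsSymm) (hE : E.IsSymm)
    -- eigenvalues and orthonormal eigenvectors of A, in increasing order
    (lam : Fin n → ℝ) (u : Fin n → Fin n → ℝ)
    (hlamMono : Monotone lam)
    (huOrtho : ∀ i j, ∑ x, u i x * u j x = if i = j then (1 : ℝ) else 0)
    (huEig : ∀ j, A.mulVec (u j) = lam j • u j)
    -- eigenvalues and orthonormal eigenvectors of Ã = A + E, in increasing order
    (tlam : Fin n → ℝ) (tu : Fin n → Fin n → ℝ)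
    (htlamMono : Monotone tlam)
    (htuOrtho : ∀ i j, ∑ x, tu i x * tu j x = if i = j then (1 : ℝ) else 0)
    (htuEig : ∀ j, (A + E).mulVec (tu j) = tlam j • tu j)
    -- eigenvalues of EᵀE in decreasing order, with orthonormal eigenvectors
    (μ : Fin n → ℝ) (w : Fin n → Fin n → ℝ)
    (hμAnti : Antitone μ)
    (hwOrtho : ∀ i j, ∑ x, w i x * w j x = if i = j then (1 : ℝ) else 0)
    (hwEig : ∀ j, (Eᵀ * E).mulVec (w j) = μ j • w j)
    -- eigengap assumption: λ̃_{ρ+1} > λ_ρ  (1-indexed; 0-indexed below)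
    (hgap : lam ⟨ρ - 1, by omega⟩ < tlam ⟨ρ, hρn⟩)
    -- U₁ = [u₁ ⋯ u_ρ] and Ũ₂ = [ũ_{ρ+1} ⋯ ũ_n]
    (U₁ : Matrix (Fin n) (Fin ρ) ℝ)
    (hU₁ : ∀ x j, U₁ x j = u (Fin.castLE hρn.le j) x)
    (tU₂ : Matrix (Fin n) (Fin (n - ρ)) ℝ)
    (htU₂ : ∀ (x : Fin n) (j : Fin (n - ρ)), tU₂ x j = tu ⟨ρ + j.1, by omega⟩ x) :
    frobNorm (tU₂ᵀ * U₁) ≤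
      Real.sqrt (∑ j : Fin ρ, μ (Fin.castLE hρn.le j)) /
        (tlam ⟨ρ, hρn⟩ - lam ⟨ρ - 1, by omega⟩) := by
  set δ := tlam ⟨ρ, hρn⟩ - lam ⟨ρ - 1, by omega⟩
  have hδ : 0 < δ := sub_pos.mpr hgap
  set head := univ.map (Fin.castLEEmb hρn.le)
  set tail := univ.map (Fin.natAdd_castLEEmb (n.sub_le ρ))
  have mem_head : ∀ k, k ∈ head ↔ (k : ℕ) < ρ := fun k => by
    simp only [head, mem_map, mem_univ, true_and, Fin.coe_castLEEmb]
    exact ⟨fun ⟨j, hj⟩ => hj ▸ j.isLt, fun hk => ⟨⟨k, hk⟩, rfl⟩⟩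
  have mem_tail : ∀ k ∈ tail, ρ ≤ (k : ℕ) := fun k hk => by
    obtain ⟨i, -, rfl⟩ := mem_map.mp hk
    simp only [Fin.natAdd_castLEEmb_apply_val]
    omega
  have hfrob : frobNorm (tU₂ᵀ * U₁) = √(∑ k ∈ tail, ∑ j ∈ head, (tu k ⬝ᵥ u j) ^ 2) := by
    have htail : ∀ i : Fin (n - ρ), Fin.natAdd_castLEEmb (n.sub_le ρ) i = ⟨ρ + i, by omega⟩ :=
      fun i => Fin.ext (by simp only [Fin.natAdd_castLEEmb_apply_val]; omega)
    simp only [frobNorm, head, tail, sum_map, htail, Fin.coe_castLEEmb]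
    congr! with i _ j _
    simp only [mul_apply, transpose_apply, htU₂, hU₁, dotProduct]
  have hsin := sq_mul_sum_sq_dotProduct_le_of_eigengap (hA.add hE) huEig htuOrtho htuEig head tail
    hδ.le fun k hk j hj => by
      have hk' := htlamMono (show (⟨ρ, hρn⟩ : Fin n) ≤ k from Fin.le_def.mpr (mem_tail k hk))
      have hj' := hlamMono (show j ≤ ⟨ρ - 1, by omega⟩ from
        Fin.le_def.mpr (Nat.le_sub_one_of_lt ((mem_head j).mp hj)))
      linarith
  have hkyfan := sum_dotProduct_mulVec_le_sum_eigenvalues hwOrtho hwEig huOrtho head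
    (μ ⟨ρ, hρn⟩) (fun k hk => hμAnti (Fin.le_def.mpr ((mem_head k).mp hk).le))
    (fun k hk => hμAnti (Fin.le_def.mpr (not_lt.mp (mt (mem_head k).mpr hk))))
  rw [hfrob, le_div_iff₀ hδ, ← Real.sqrt_sq hδ.le, ← Real.sqrt_mul (by positivity)]
  refine Real.sqrt_le_sqrt ?_
  rw [mul_comm]
  exact hsin.trans (hkyfan.trans_eq (sum_map _ _ _))
end
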